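/- arXiv:1909.04289 — 2 statements merged into one kernel-verified Lean document; each statement's English description precedes it below -/
import Mathlib

section
/- Averaging lemma for two well-separated scales: let h : ℝ × ℝ → ℝ be C¹, 1-periodic in its second variable, with ‖h‖ and ‖∂₁h‖ bounded by M. Then for 0 < ε₂ ≤ ε₁ and any a < b, |∫_a^b h(t/ε₁, t/ε₂) dt − ∫_a^b (∫₀¹ h(t/ε₁, s) ds) dt| ≤ C (ε₂/ε₁) where C depends only on M, a, b. -/
/-!
On a cell `[c, c + ε₂]` the slow variable `t / ε₁` moves by at most `ε₂ / ε₁`. Freezing it at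
`c / ε₁` therefore costs at most `2 M ε₂ / ε₁` pointwise, because `h` and its period average are
both `M`-Lipschitz in the slow variable; and the frozen integrand runs through exactly one period
of the fast variable, so it integrates to the period average. Summing over the `⌊(b - a) / ε₂⌋`
full cells and bounding the leftover piece of length `< ε₂ ≤ ε₂ / ε₁` by `2 M` gives the estimate.
-/

open MeasureTheory Function

theorem abs_sub_le_of_abs_deriv_le {g : ℝ → ℝ} {M : ℝ} (hg : Differentiable ℝ g)
    (hg' : ∀ x, |deriv g x| ≤ M) (x y : ℝ) : |g x - g y| ≤ M * |x - y| := by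
  simpa only [Real.norm_eq_abs] using
    convex_univ.norm_image_sub_le_of_norm_deriv_le (fun z _ => hg z) (fun z _ => hg' z)
      (Set.mem_univ y) (Set.mem_univ x)

theorem intervalIntegral_comp_div_of_periodic {g : ℝ → ℝ} (hg : Periodic g 1) {ε : ℝ}
    (hε : ε ≠ 0) (c : ℝ) : ∫ t in c..c + ε, g (t / ε) = ε * ∫ s in (0 : ℝ)..1, g s := by
  rw [intervalIntegral.integral_comp_div g hε, add_div, div_self hε,
    hg.intervalIntegral_add_eq (c / ε) 0, zero_add, smul_eq_mul]

section Cells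

variable {f : ℝ → ℝ} {η δ : ℝ}

theorem abs_integral_le_nat_mul_of_abs_integral_cell_le (hf : Continuous f)
    (hcell : ∀ c, |∫ t in c..c + δ, f t| ≤ η * δ) (a : ℝ) (n : ℕ) :
    |∫ t in a..a + n * δ, f t| ≤ n * (η * δ) := by
  induction n with
  | zero => simp
  | succ n ih =>
    rw [Nat.cast_succ, add_one_mul, ← add_assoc,
      ← intervalIntegral.integral_add_adjacent_intervals (hf.intervalIntegrable _ _)
        (hf.intervalIntegrable _ _)]
    calc _ ≤ |∫ t in a..a + n * δ, f t| + |∫ t in a + n * δ..a + n * δ + δ, f t| :=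
          abs_add_le _ _
      _ ≤ n * (η * δ) + η * δ := add_le_add ih (hcell _)
      _ = (n + 1) * (η * δ) := by ring

theorem abs_integral_le_of_abs_integral_cell_le_of_le (hf : Continuous f)
    (hcell : ∀ c, |∫ t in c..c + δ, f t| ≤ η * δ) {K : ℝ} (hK : ∀ t, |f t| ≤ K)
    (hδ : 0 < δ) {a b : ℝ} (hab : a ≤ b) : |∫ t in a..b, f t| ≤ η * (b - a) + K * δ := by
  have hη : 0 ≤ η := nonneg_of_mul_nonneg_left ((abs_nonneg _).trans (hcell a)) hδ
  have hK₀ : 0 ≤ K := (abs_nonneg _).trans (hK a)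
  set N : ℕ := ⌊(b - a) / δ⌋₊
  have hN : N * δ ≤ b - a :=
    (le_div_iff₀ hδ).mp (Nat.floor_le (div_nonneg (sub_nonneg.2 hab) hδ.le))
  have hN' : b - a < N * δ + δ := by
    have := (div_lt_iff₀ hδ).mp (Nat.lt_floor_add_one ((b - a) / δ))
    linarith
  have htail : |∫ t in a + N * δ..b, f t| ≤ K * δ := by
    refine (intervalIntegral.norm_integral_le_of_norm_le_const
      fun t _ => (Real.norm_eq_abs _).trans_le (hK t)).trans ?_
    gcongr
    rw [abs_le]
    constructor <;> linarith
  rw [← intervalIntegral.integral_add_adjacent_intervals (hf.intervalIntegrable a (a + N * δ))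
    (hf.intervalIntegrable _ b)]
  calc _ ≤ |∫ t in a..a + N * δ, f t| + |∫ t in a + N * δ..b, f t| := abs_add_le _ _
    _ ≤ N * (η * δ) + K * δ :=
        add_le_add (abs_integral_le_nat_mul_of_abs_integral_cell_le hf hcell a N) htail
    _ ≤ η * (b - a) + K * δ := by linarith [mul_le_mul_of_nonneg_left hN hη]

theorem abs_integral_le_of_abs_integral_cell_le (hf : Continuous f)
    (hcell : ∀ c, |∫ t in c..c + δ, f t| ≤ η * δ) {K : ℝ} (hK : ∀ t, |f t| ≤ K) (hδ : 0 < δ)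
    (a b : ℝ) : |∫ t in a..b, f t| ≤ η * |b - a| + K * δ := by
  rcases le_total a b with hab | hba
  · rw [abs_of_nonneg (sub_nonneg.2 hab)]
    exact abs_integral_le_of_abs_integral_cell_le_of_le hf hcell hK hδ hab
  · rw [intervalIntegral.integral_symm, abs_neg, abs_sub_comm, abs_of_nonneg (sub_nonneg.2 hba)]
    exact abs_integral_le_of_abs_integral_cell_le_of_le hf hcell hK hδ hba

end Cells

noncomputable def periodAverage (h : ℝ → ℝ → ℝ) (u : ℝ) : ℝ :=
  ∫ s in (0 : ℝ)..1, h u s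

section PeriodAverage

variable {h : ℝ → ℝ → ℝ} {M : ℝ}

theorem continuous_periodAverage (hh : Continuous (uncurry h)) : Continuous (periodAverage h) :=
  intervalIntegral.continuous_parametric_intervalIntegral_of_continuous' hh 0 1

theorem abs_periodAverage_le {u : ℝ} (hbd : ∀ v, |h u v| ≤ M) : |periodAverage h u| ≤ M := by
  simpa [periodAverage] using intervalIntegral.norm_integral_le_of_norm_le_const (a := 0) (b := 1)
    fun v (_ : v ∈ Set.uIoc 0 1) => (Real.norm_eq_abs _).trans_le (hbd v)

theorem abs_periodAverage_sub_le (hh : ∀ u, Continuous (h u))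
    (hLip : ∀ v u u', |h u v - h u' v| ≤ M * |u - u'|) (u u' : ℝ) :
    |periodAverage h u - periodAverage h u'| ≤ M * |u - u'| := by
  rw [periodAverage, periodAverage, ← intervalIntegral.integral_sub
    ((hh u).intervalIntegrable 0 1) ((hh u').intervalIntegrable 0 1)]
  simpa using intervalIntegral.norm_integral_le_of_norm_le_const (a := 0) (b := 1)
    fun v (_ : v ∈ Set.uIoc 0 1) => (Real.norm_eq_abs _).trans_le (hLip v u u')

theorem abs_sub_periodAverage_le (hbd : ∀ u v, |h u v| ≤ M) (u v w : ℝ) :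
    |h u v - periodAverage h w| ≤ 2 * M :=
  calc _ ≤ |h u v| + |periodAverage h w| := abs_sub _ _
    _ ≤ M + M := add_le_add (hbd u v) (abs_periodAverage_le (hbd w))
    _ = 2 * M := by ring

theorem abs_integral_cell_sub_periodAverage_le (hh : Continuous (uncurry h))
    (hper : ∀ u v, h u (v + 1) = h u v) (hM : 0 ≤ M)
    (hLip : ∀ v u u', |h u v - h u' v| ≤ M * |u - u'|) {ε₁ ε₂ : ℝ} (hε₁ : 0 < ε₁)
    (hε₂ : 0 < ε₂) (c : ℝ) :
    |∫ t in c..c + ε₂, (h (t / ε₁) (t / ε₂) - periodAverage h (t / ε₁))|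
      ≤ 2 * M * (ε₂ / ε₁) * ε₂ := by
  have hslice : ∀ u, Continuous (h u) := fun u => hh.comp (Continuous.prodMk_right u)
  set u₀ := c / ε₁
  have hslice₀ : Continuous fun t => h u₀ (t / ε₂) := (hslice u₀).comp (continuous_id.div_const ε₂)
  have hfrozen : ∫ t in c..c + ε₂, (h u₀ (t / ε₂) - periodAverage h u₀) = 0 := by
    rw [intervalIntegral.integral_sub (hslice₀.intervalIntegrable _ _) intervalIntegrable_const,
      intervalIntegral_comp_div_of_periodic (hper u₀) hε₂.ne', intervalIntegral.integral_const,
      add_sub_cancel_left, smul_eq_mul, periodAverage, sub_self]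
  have hclose : ∀ t ∈ Set.uIoc c (c + ε₂),
      |(h (t / ε₁) (t / ε₂) - periodAverage h (t / ε₁))
        - (h u₀ (t / ε₂) - periodAverage h u₀)| ≤ 2 * M * (ε₂ / ε₁) := by
    intro t ht
    rw [Set.uIoc_of_le (by linarith)] at ht
    have hslow : |t / ε₁ - u₀| ≤ ε₂ / ε₁ := by
      rw [← sub_div, abs_div, abs_of_pos hε₁, abs_of_pos (by linarith [ht.1])]
      gcongr
      linarith [ht.2]
    calc _ = |(h (t / ε₁) (t / ε₂) - h u₀ (t / ε₂))
            + (periodAverage h u₀ - periodAverage h (t / ε₁))| := by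
          congr 1
          ring
      _ ≤ M * |t / ε₁ - u₀| + M * |u₀ - t / ε₁| :=
          (abs_add_le _ _).trans
            (add_le_add (hLip _ _ _) (abs_periodAverage_sub_le hslice hLip _ _))
      _ ≤ M * (ε₂ / ε₁) + M * (ε₂ / ε₁) := by
          rw [abs_sub_comm u₀]
          gcongr
      _ = 2 * M * (ε₂ / ε₁) := by ring
  have hdev : Continuous fun t => h (t / ε₁) (t / ε₂) - periodAverage h (t / ε₁) :=
    (hh.comp ((continuous_id.div_const ε₁).prodMk (continuous_id.div_const ε₂))).sub
      ((continuous_periodAverage hh).comp (continuous_id.div_const ε₁))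
  have hfrozenInt : IntervalIntegrable (fun t => h u₀ (t / ε₂) - periodAverage h u₀) volume c
      (c + ε₂) := (hslice₀.sub continuous_const).intervalIntegrable _ _
  rw [← sub_zero (∫ t in c..c + ε₂, _), ← hfrozen,
    ← intervalIntegral.integral_sub (hdev.intervalIntegrable _ _) hfrozenInt]
  calc _ ≤ 2 * M * (ε₂ / ε₁) * |c + ε₂ - c| :=
        intervalIntegral.norm_integral_le_of_norm_le_const fun t ht =>
          (Real.norm_eq_abs _).trans_le (hclose t ht)
    _ = 2 * M * (ε₂ / ε₁) * ε₂ := by rw [add_sub_cancel_left, abs_of_pos hε₂]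

end PeriodAverage

theorem two_scale_averaging_general (M a b : ℝ) :
    ∃ C : ℝ, ∀ h : ℝ → ℝ → ℝ,
      ContDiff ℝ 1 (fun p : ℝ × ℝ => h p.1 p.2) →
      (∀ u v : ℝ, h u (v + 1) = h u v) →
      (∀ u v : ℝ, |h u v| ≤ M) →
      (∀ u v : ℝ, |deriv (fun u' => h u' v) u| ≤ M) →
      ∀ ε₁ ε₂ : ℝ, 0 < ε₂ → ε₂ ≤ ε₁ → ε₁ ≤ 1 →
        |(∫ t in a..b, h (t / ε₁) (t / ε₂)) -
          ∫ t in a..b, ∫ s in (0:ℝ)..1, h (t / ε₁) s| ≤ C * (ε₂ / ε₁) := by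
  refine ⟨2 * M * (|b - a| + 1), fun h hC hper hbd hbd' ε₁ ε₂ hε₂ hle hε₁1 => ?_⟩
  have hε₁ : 0 < ε₁ := hε₂.trans_le hle
  have hM : 0 ≤ M := (abs_nonneg _).trans (hbd 0 0)
  have hh : Continuous (uncurry h) := hC.continuous
  have hLip : ∀ v u u', |h u v - h u' v| ≤ M * |u - u'| := fun v =>
    abs_sub_le_of_abs_deriv_le
      ((hC.comp (contDiff_id.prodMk contDiff_const)).differentiable one_ne_zero) (hbd' · v)
  have hfast : Continuous fun t => h (t / ε₁) (t / ε₂) :=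
    hh.comp ((continuous_id.div_const ε₁).prodMk (continuous_id.div_const ε₂))
  have hslow : Continuous fun t => periodAverage h (t / ε₁) :=
    (continuous_periodAverage hh).comp (continuous_id.div_const ε₁)
  change |_ - ∫ t in a..b, periodAverage h (t / ε₁)| ≤ _
  rw [← intervalIntegral.integral_sub (hfast.intervalIntegrable a b)
    (hslow.intervalIntegrable a b)]
  calc _ ≤ 2 * M * (ε₂ / ε₁) * |b - a| + 2 * M * ε₂ :=
        abs_integral_le_of_abs_integral_cell_le (hfast.sub hslow)
          (abs_integral_cell_sub_periodAverage_le hh hper hM hLip hε₁ hε₂)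
          (fun t => abs_sub_periodAverage_le hbd _ _ _) hε₂ a b
    _ ≤ 2 * M * (ε₂ / ε₁) * |b - a| + 2 * M * (ε₂ / ε₁) := by
        gcongr
        exact le_div_self hε₂.le hε₁ hε₁1
    _ = 2 * M * (|b - a| + 1) * (ε₂ / ε₁) := by ring

/-- Averaging lemma for two well-separated scales: for `h : ℝ × ℝ → ℝ` of class `C¹`,
1-periodic in its second variable, with `‖h‖` and `‖∂₁h‖` bounded by `M`, one has
`|∫_a^b h(t/ε₁, t/ε₂) dt − ∫_a^b (∫₀¹ h(t/ε₁, s) ds) dt| ≤ C ε₂/ε₁` where `C`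
depends only on `M`, `a`, `b`. -/
theorem two_scale_averaging (M a b : ℝ) (hM : 0 ≤ M) (hab : a < b) :
    ∃ C : ℝ, ∀ h : ℝ → ℝ → ℝ,
      ContDiff ℝ 1 (fun p : ℝ × ℝ => h p.1 p.2) →
      (∀ u v : ℝ, h u (v + 1) = h u v) →
      (∀ u v : ℝ, |h u v| ≤ M) →
      (∀ u v : ℝ, |deriv (fun u' => h u' v) u| ≤ M) →
      ∀ ε₁ ε₂ : ℝ, 0 < ε₂ → ε₂ ≤ ε₁ → ε₁ ≤ 1 →
        |(∫ t in a..b, h (t / ε₁) (t / ε₂)) -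
          ∫ t in a..b, ∫ s in (0:ℝ)..1, h (t / ε₁) s| ≤ C * (ε₂ / ε₁) :=
  two_scale_averaging_general M a b
end

section
/- Non-stiffness of the transformed drift in the single-scale case: with F(t,x) := (I + ε ∂ₓg(t/ε, x))⁻¹ ( f̄(x) + f₁(t/ε, Φ(t/ε,x)) − f₁(t/ε, x) ) where Φ(τ,x) = x + ε g(τ,x), the time derivative ∂ₜF is bounded by a constant C₀ independent of ε, provided f̄, f₁ are C² with bounded derivatives, f₁ is 1-periodic mean-zero in its first argument, and ε is small enough that ‖ε ∂ₓg‖ ≤ 1/2 uniformly. -/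
/-!
Rather than differentiating the transformed drift in `t`, we show that `t ↦ F(t, x)` is
`16 M²`-Lipschitz, which bounds its derivative (also where it is not differentiable, since
`deriv` is then `0`). Each `t`-derivative of the fast time `t / ε` costs a factor `1 / ε`, and
each such factor meets a factor `ε`: in the Jacobian `I + ε ∂ₓg(t / ε)`, in the shift
`Φ(t / ε, x) - x = ε g(t / ε, x)`, and in the mixed difference of `f₁` along that shift. This only
needs `g` to be bounded uniformly in time, which is where periodicity and zero mean of `f₁` enter.
-/

open MeasureTheory Function Set Filter

section NearIdentity

variable {R : Type*} [NormedRing R] [HasSummableGeomSeries R] {a b : R}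

theorem isUnit_of_norm_sub_one_lt (ha : ‖a - 1‖ < 1) : IsUnit a :=
  sub_sub_cancel 1 a ▸ (Units.oneSub (1 - a) (by rwa [norm_sub_rev])).isUnit

theorem norm_inverse_le_two_of_norm_sub_one_le_half (h1 : ‖(1 : R)‖ ≤ 1) (ha : ‖a - 1‖ ≤ 1 / 2) :
    ‖Ring.inverse a‖ ≤ 2 := by
  have hunit := isUnit_of_norm_sub_one_lt (a := a) (by linarith)
  have hfix : Ring.inverse a = 1 - (a - 1) * Ring.inverse a := by
    rw [sub_mul, Ring.mul_inverse_cancel a hunit, one_mul, sub_sub_cancel]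
  have : ‖Ring.inverse a‖ ≤ 1 + 1 / 2 * ‖Ring.inverse a‖ :=
    calc ‖Ring.inverse a‖ ≤ ‖(1 : R)‖ + ‖(a - 1) * Ring.inverse a‖ := by
          conv_lhs => rw [hfix]
          exact norm_sub_le _ _
      _ ≤ 1 + 1 / 2 * ‖Ring.inverse a‖ := by
          gcongr
          exact (norm_mul_le _ _).trans (by gcongr)
  linarith

theorem norm_inverse_sub_inverse_le_of_norm_sub_one_le_half (h1 : ‖(1 : R)‖ ≤ 1)
    (ha : ‖a - 1‖ ≤ 1 / 2) (hb : ‖b - 1‖ ≤ 1 / 2) :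
    ‖Ring.inverse a - Ring.inverse b‖ ≤ 4 * ‖a - b‖ := by
  have hfactor : Ring.inverse a - Ring.inverse b = Ring.inverse a * (b - a) * Ring.inverse b := by
    rw [mul_sub, sub_mul, mul_assoc,
      Ring.mul_inverse_cancel b (isUnit_of_norm_sub_one_lt (by linarith)),
      Ring.inverse_mul_cancel a (isUnit_of_norm_sub_one_lt (by linarith)), mul_one, one_mul]
  calc ‖Ring.inverse a - Ring.inverse b‖
      ≤ ‖Ring.inverse a‖ * ‖b - a‖ * ‖Ring.inverse b‖ := hfactor ▸ norm_mul₃_le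
    _ ≤ 2 * ‖b - a‖ * 2 := by gcongr <;> exact norm_inverse_le_two_of_norm_sub_one_le_half h1 ‹_›
    _ = 4 * ‖a - b‖ := by rw [norm_sub_rev]; ring

end NearIdentity

theorem norm_inverse_apply_sub_inverse_apply_le {E : Type*} [NormedAddCommGroup E]
    [NormedSpace ℝ E] [CompleteSpace E] {A B : E →L[ℝ] E} (hA : ‖A - 1‖ ≤ 1 / 2)
    (hB : ‖B - 1‖ ≤ 1 / 2) (v w : E) :
    ‖Ring.inverse A v - Ring.inverse B w‖ ≤ 4 * ‖A - B‖ * ‖v‖ + 2 * ‖v - w‖ := by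
  have h1 : ‖(1 : E →L[ℝ] E)‖ ≤ 1 := ContinuousLinearMap.norm_id_le
  calc ‖Ring.inverse A v - Ring.inverse B w‖
      = ‖(Ring.inverse A - Ring.inverse B) v + Ring.inverse B (v - w)‖ := by
        rw [sub_apply, map_sub]; abel_nf
    _ ≤ ‖Ring.inverse A - Ring.inverse B‖ * ‖v‖ + ‖Ring.inverse B‖ * ‖v - w‖ :=
        norm_add_le_of_le (ContinuousLinearMap.le_opNorm _ _) (ContinuousLinearMap.le_opNorm _ _)
    _ ≤ 4 * ‖A - B‖ * ‖v‖ + 2 * ‖v - w‖ := by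
        gcongr
        exacts [norm_inverse_sub_inverse_le_of_norm_sub_one_le_half h1 hA hB,
          norm_inverse_le_two_of_norm_sub_one_le_half h1 hB]

section Slices

variable {E F : Type*} [NormedAddCommGroup E] [NormedSpace ℝ E] [NormedAddCommGroup F]
  [NormedSpace ℝ F] {f : ℝ → E → F} {M : ℝ}

theorem norm_sub_le_of_norm_fderiv_le {φ : E → F} (hφ : Differentiable ℝ φ)
    (bound : ∀ x, ‖fderiv ℝ φ x‖ ≤ M) (x y : E) : ‖φ y - φ x‖ ≤ M * ‖y - x‖ :=
  convex_univ.norm_image_sub_le_of_norm_fderiv_le (fun x _ => hφ x) (fun x _ => bound x)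
    trivial trivial

theorem hasFDerivAt_of_differentiable_uncurry (hf : Differentiable ℝ (uncurry f)) (s : ℝ)
    (z : E) : HasFDerivAt (f s) ((fderiv ℝ (uncurry f) (s, z)).comp (.inr ℝ ℝ E)) z :=
  (hf (s, z)).hasFDerivAt.comp z (hasFDerivAt_prodMk_right s z)

theorem continuous_fderiv_of_contDiff_uncurry (hf : ContDiff ℝ 1 (uncurry f)) (z : E) :
    Continuous fun s => fderiv ℝ (f s) z := by
  refine (((hf.continuous_fderiv one_ne_zero).comp (.prodMk_left z)).clm_comp
    (continuous_const (y := .inr ℝ ℝ E))).congr fun s => ?_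
  exact ((hasFDerivAt_of_differentiable_uncurry (hf.differentiable one_ne_zero) s z).fderiv).symm

theorem norm_comp_inr_le (A : ℝ × E →L[ℝ] F) : ‖A.comp (.inr ℝ ℝ E)‖ ≤ ‖A‖ :=
  (A.opNorm_comp_le _).trans
    (mul_le_of_le_one_right (norm_nonneg A) (ContinuousLinearMap.norm_inr_le_one ℝ ℝ E))

theorem norm_fderiv_le_of_norm_fderiv_uncurry_le (hf : Differentiable ℝ (uncurry f))
    (bound : ∀ p, ‖fderiv ℝ (uncurry f) p‖ ≤ M) (s : ℝ) (z : E) :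
    ‖fderiv ℝ (f s) z‖ ≤ M := by
  rw [(hasFDerivAt_of_differentiable_uncurry hf s z).fderiv]
  exact (norm_comp_inr_le _).trans (bound _)

theorem norm_sub_le_of_norm_fderiv_uncurry_le (hf : Differentiable ℝ (uncurry f))
    (bound : ∀ p, ‖fderiv ℝ (uncurry f) p‖ ≤ M) (s : ℝ) (y y' : E) :
    ‖f s y - f s y'‖ ≤ M * ‖y - y'‖ :=
  norm_sub_le_of_norm_fderiv_le
    (fun z => (hasFDerivAt_of_differentiable_uncurry hf s z).differentiableAt)
    (norm_fderiv_le_of_norm_fderiv_uncurry_le hf bound s) y' y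

theorem norm_fderiv_sub_fderiv_le (hf : ContDiff ℝ 2 (uncurry f))
    (bound : ∀ p, ‖fderiv ℝ (fderiv ℝ (uncurry f)) p‖ ≤ M) (s s' : ℝ) (z : E) :
    ‖fderiv ℝ (f s) z - fderiv ℝ (f s') z‖ ≤ M * |s - s'| := by
  have hdiff := hf.differentiable two_ne_zero
  rw [(hasFDerivAt_of_differentiable_uncurry hdiff s z).fderiv,
    (hasFDerivAt_of_differentiable_uncurry hdiff s' z).fderiv, ← ContinuousLinearMap.sub_comp]
  refine (norm_comp_inr_le _).trans ?_
  simpa [Prod.norm_def] using norm_sub_le_of_norm_fderiv_le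
    ((hf.fderiv_right le_rfl).differentiable one_ne_zero) bound (s', z) (s, z)

theorem norm_sub_sub_sub_le_of_contDiff_uncurry (hf : ContDiff ℝ 2 (uncurry f))
    (bound : ∀ p, ‖fderiv ℝ (fderiv ℝ (uncurry f)) p‖ ≤ M) (s s' : ℝ) (x y : E) :
    ‖(f s y - f s x) - (f s' y - f s' x)‖ ≤ M * |s - s'| * ‖y - x‖ := by
  have hdiff := hf.differentiable two_ne_zero
  have hderiv (z : E) : HasFDerivAt (fun w => f s w - f s' w)
      (fderiv ℝ (f s) z - fderiv ℝ (f s') z) z :=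
    ((hasFDerivAt_of_differentiable_uncurry hdiff s z).differentiableAt.hasFDerivAt).sub
      (hasFDerivAt_of_differentiable_uncurry hdiff s' z).differentiableAt.hasFDerivAt
  rw [sub_sub_sub_comm]
  exact norm_sub_le_of_norm_fderiv_le (fun z => (hderiv z).differentiableAt)
    (fun z => (hderiv z).fderiv ▸ norm_fderiv_sub_fderiv_le hf bound s s' z) x y

theorem norm_intervalIntegral_sub_le {φ : ℝ → F} {C : ℝ} (hφ : Continuous φ)
    (bound : ∀ s, ‖φ s‖ ≤ C) (a b c : ℝ) :
    ‖(∫ s in a..b, φ s) - ∫ s in a..c, φ s‖ ≤ C * |b - c| := by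
  rw [intervalIntegral.integral_interval_sub_left (hφ.intervalIntegrable _ _)
    (hφ.intervalIntegrable _ _)]
  exact intervalIntegral.norm_integral_le_of_norm_le_const fun s _ => bound s

theorem Function.Periodic.norm_intervalIntegral_le {φ : ℝ → F} {T C : ℝ}
    (hφ : Periodic φ T) (hT : 0 < T) (hcont : Continuous φ) (hmean : ∫ s in 0..T, φ s = 0)
    (bound : ∀ s, ‖φ s‖ ≤ C) (t : ℝ) : ‖∫ s in 0..t, φ s‖ ≤ C * T := by
  have hint (a b : ℝ) : IntervalIntegrable φ volume a b := hcont.intervalIntegrable a b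
  obtain ⟨r, ⟨hr₀, hrT⟩, n, rfl⟩ : ∃ r ∈ Ico 0 T, ∃ n : ℤ, t = r + n • T :=
    ⟨_, Int.fract_div_mul_self_mem_Ico T t hT, _,
      (Int.fract_div_mul_self_add_zsmul_eq T t hT.ne').symm⟩
  rw [← intervalIntegral.integral_add_adjacent_intervals (hint 0 r) (hint r _),
    hφ.intervalIntegral_add_zsmul_eq n r hint, hφ.intervalIntegral_add_eq r 0, zero_add, hmean,
    smul_zero, add_zero]
  calc ‖∫ s in 0..r, φ s‖ ≤ C * |r - 0| :=
        intervalIntegral.norm_integral_le_of_norm_le_const fun s _ => bound s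
    _ ≤ C * T := by
        rw [sub_zero, abs_of_nonneg hr₀]
        exact mul_le_mul_of_nonneg_left hrT.le ((norm_nonneg _).trans (bound 0))

theorem hasFDerivAt_intervalIntegral_of_contDiff_uncurry [CompleteSpace F]
    (hf : ContDiff ℝ 1 (uncurry f)) (bound : ∀ p, ‖fderiv ℝ (uncurry f) p‖ ≤ M) (a b : ℝ)
    (x : E) : HasFDerivAt (fun z => ∫ s in a..b, f s z) (∫ s in a..b, fderiv ℝ (f s) x) x := by
  have hdiff := hf.differentiable one_ne_zero
  have hcont (z : E) : Continuous fun s => f s z := hf.continuous.comp (.prodMk_left z)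
  exact intervalIntegral.hasFDerivAt_integral_of_dominated_of_fderiv_le (F := fun z s => f s z)
    (F' := fun z s => fderiv ℝ (f s) z) (bound := fun _ => M) univ_mem
    (Eventually.of_forall fun z => (hcont z).aestronglyMeasurable)
    ((hcont x).intervalIntegrable a b)
    (continuous_fderiv_of_contDiff_uncurry hf x).aestronglyMeasurable
    (ae_of_all _ fun s _ z _ => norm_fderiv_le_of_norm_fderiv_uncurry_le hdiff bound s z)
    intervalIntegrable_const
    (ae_of_all _ fun s _ z _ =>
      (hasFDerivAt_of_differentiable_uncurry hdiff s z).differentiableAt.hasFDerivAt)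

theorem norm_fderiv_intervalIntegral_sub_le [CompleteSpace F] (hf : ContDiff ℝ 1 (uncurry f))
    (bound : ∀ p, ‖fderiv ℝ (uncurry f) p‖ ≤ M) (τ τ' : ℝ) (x : E) :
    ‖fderiv ℝ (fun z => ∫ s in 0..τ, f s z) x - fderiv ℝ (fun z => ∫ s in 0..τ', f s z) x‖
      ≤ M * |τ - τ'| := by
  rw [(hasFDerivAt_intervalIntegral_of_contDiff_uncurry hf bound 0 τ x).fderiv,
    (hasFDerivAt_intervalIntegral_of_contDiff_uncurry hf bound 0 τ' x).fderiv]
  exact norm_intervalIntegral_sub_le (continuous_fderiv_of_contDiff_uncurry hf x)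
    (norm_fderiv_le_of_norm_fderiv_uncurry_le (hf.differentiable one_ne_zero) bound · x) 0 τ τ'

end Slices

section TransformedDrift

variable {E : Type*} [NormedAddCommGroup E] [NormedSpace ℝ E] {M ε : ℝ}

noncomputable def transformedDrift (fbar : E → E) (f g : ℝ → E → E) (ε t : ℝ) (x : E) : E :=
  Ring.inverse ((1 : E →L[ℝ] E) + ε • fderiv ℝ (g (t / ε)) x)
    (fbar x + f (t / ε) (x + ε • g (t / ε) x) - f (t / ε) x)

theorem norm_smul_comp_div_sub_le {F : Type*} [NormedAddCommGroup F] [NormedSpace ℝ F]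
    {h : ℝ → F} {L : ℝ} (hε : 0 < ε) (hh : ∀ τ τ', ‖h τ - h τ'‖ ≤ L * |τ - τ'|) (t t' : ℝ) :
    ‖ε • h (t / ε) - ε • h (t' / ε)‖ ≤ L * |t - t'| := by
  rw [← smul_sub, norm_smul, Real.norm_of_nonneg hε.le]
  calc ε * ‖h (t / ε) - h (t' / ε)‖ ≤ ε * (L * |t / ε - t' / ε|) := by gcongr; exact hh _ _
    _ = L * |t - t'| := by
        rw [← sub_div, abs_div, abs_of_pos hε]
        field_simp

theorem norm_drift_sub_le {f g : ℝ → E → E} {x : E} (hε : 0 < ε)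
    (hf_lip : ∀ τ y y', ‖f τ y - f τ y'‖ ≤ M * ‖y - y'‖)
    (hf_dd : ∀ τ τ' y, ‖(f τ y - f τ x) - (f τ' y - f τ' x)‖ ≤ M * |τ - τ'| * ‖y - x‖)
    (hg_bdd : ∀ τ, ‖g τ x‖ ≤ M) (hg_lip : ∀ τ τ', ‖g τ x - g τ' x‖ ≤ M * |τ - τ'|)
    (t t' : ℝ) :
    ‖(f (t / ε) (x + ε • g (t / ε) x) - f (t / ε) x)
        - (f (t' / ε) (x + ε • g (t' / ε) x) - f (t' / ε) x)‖ ≤ 2 * M ^ 2 * |t - t'| := by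
  have hM : 0 ≤ M := (norm_nonneg _).trans (hg_bdd 0)
  set y := x + ε • g (t / ε) x
  set y' := x + ε • g (t' / ε) x
  have hyy' : ‖y - y'‖ ≤ M * |t - t'| := by
    rw [add_sub_add_left_eq_sub]
    exact norm_smul_comp_div_sub_le (h := (g · x)) hε hg_lip t t'
  have hy'x : ‖y' - x‖ ≤ ε * M := by
    rw [add_sub_cancel_left, norm_smul, Real.norm_of_nonneg hε.le]
    exact mul_le_mul_of_nonneg_left (hg_bdd _) hε.le
  have hττ' : |t / ε - t' / ε| = |t - t'| / ε := by rw [← sub_div, abs_div, abs_of_pos hε]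
  -- the `1 / ε` from the fast time is paid for by the `O(ε)` size of the shift `y' - x`
  calc _ = ‖(f (t / ε) y - f (t / ε) y')
          + ((f (t / ε) y' - f (t / ε) x) - (f (t' / ε) y' - f (t' / ε) x))‖ := by
        congr 1; abel
    _ ≤ M * ‖y - y'‖ + M * |t / ε - t' / ε| * ‖y' - x‖ :=
        norm_add_le_of_le (hf_lip _ _ _) (hf_dd _ _ _)
    _ ≤ M * (M * |t - t'|) + M * (|t - t'| / ε) * (ε * M) := by
        rw [hττ']; gcongr
    _ = 2 * M ^ 2 * |t - t'| := by field_simp; ring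

theorem norm_transformedDrift_sub_le [CompleteSpace E] {fbar : E → E} {f g : ℝ → E → E} {x : E}
    (hε : 0 < ε) (hsmall : ∀ τ, ε * ‖fderiv ℝ (g τ) x‖ ≤ 1 / 2) (hfbar : ‖fbar x‖ ≤ M)
    (hf_bdd : ∀ τ y, ‖f τ y‖ ≤ M) (hf_lip : ∀ τ y y', ‖f τ y - f τ y'‖ ≤ M * ‖y - y'‖)
    (hf_dd : ∀ τ τ' y, ‖(f τ y - f τ x) - (f τ' y - f τ' x)‖ ≤ M * |τ - τ'| * ‖y - x‖)
    (hg_bdd : ∀ τ, ‖g τ x‖ ≤ M) (hg_lip : ∀ τ τ', ‖g τ x - g τ' x‖ ≤ M * |τ - τ'|)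
    (hDg_lip : ∀ τ τ', ‖fderiv ℝ (g τ) x - fderiv ℝ (g τ') x‖ ≤ M * |τ - τ'|) (t t' : ℝ) :
    ‖transformedDrift fbar f g ε t x - transformedDrift fbar f g ε t' x‖
      ≤ 16 * M ^ 2 * |t - t'| := by
  have hM : 0 ≤ M := (norm_nonneg _).trans hfbar
  have hnear (s : ℝ) : ‖(1 + ε • fderiv ℝ (g (s / ε)) x) - 1‖ ≤ 1 / 2 := by
    rw [add_sub_cancel_left, norm_smul, Real.norm_of_nonneg hε.le]
    exact hsmall _
  have hjac : ‖(1 + ε • fderiv ℝ (g (t / ε)) x) - (1 + ε • fderiv ℝ (g (t' / ε)) x)‖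
      ≤ M * |t - t'| := by
    rw [add_sub_add_left_eq_sub]
    exact norm_smul_comp_div_sub_le (h := fun τ => fderiv ℝ (g τ) x) hε hDg_lip t t'
  have hnum : ‖fbar x + f (t / ε) (x + ε • g (t / ε) x) - f (t / ε) x‖ ≤ 3 * M := by
    linarith [norm_sub_le_of_le (norm_add_le_of_le hfbar (hf_bdd (t / ε) (x + ε • g (t / ε) x)))
      (hf_bdd (t / ε) x)]
  have hnum_sub : ‖(fbar x + f (t / ε) (x + ε • g (t / ε) x) - f (t / ε) x)
      - (fbar x + f (t' / ε) (x + ε • g (t' / ε) x) - f (t' / ε) x)‖ ≤ 2 * M ^ 2 * |t - t'| := by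
    rw [show ∀ a b c d : E, (fbar x + a - b) - (fbar x + c - d) = (a - b) - (c - d) by
      intros; abel]
    exact norm_drift_sub_le hε hf_lip hf_dd hg_bdd hg_lip t t'
  calc _ ≤ _ := norm_inverse_apply_sub_inverse_apply_le (hnear t) (hnear t') _ _
    _ ≤ 4 * (M * |t - t'|) * (3 * M) + 2 * (2 * M ^ 2 * |t - t'|) := by gcongr
    _ = 16 * M ^ 2 * |t - t'| := by ring

end TransformedDrift

theorem transformed_drift_nonstiff_general {d : ℕ} (M : ℝ)
    (fbar : (Fin d → ℝ) → (Fin d → ℝ))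
    (f₁ : ℝ → (Fin d → ℝ) → (Fin d → ℝ))
    (g : ℝ → (Fin d → ℝ) → (Fin d → ℝ))
    (hfbarBdd : ∀ i ≤ 2, ∀ x, ‖iteratedFDeriv ℝ i fbar x‖ ≤ M)
    (hf₁C2 : ContDiff ℝ 2 (fun p : ℝ × (Fin d → ℝ) => f₁ p.1 p.2))
    (hf₁Bdd : ∀ i ≤ 2, ∀ p : ℝ × (Fin d → ℝ),
      ‖iteratedFDeriv ℝ i (fun q : ℝ × (Fin d → ℝ) => f₁ q.1 q.2) p‖ ≤ M)
    (hf₁per : ∀ τ x, f₁ (τ + 1) x = f₁ τ x)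
    (hf₁mean : ∀ x, (∫ s in (0:ℝ)..1, f₁ s x) = 0)
    (hgdef : ∀ τ x, g τ x = ∫ s in (0:ℝ)..τ, f₁ s x) :
    ∃ C₀ : ℝ, ∀ ε : ℝ, 0 < ε →
      (∀ τ (x : Fin d → ℝ), ε * ‖fderiv ℝ (g τ) x‖ ≤ 1 / 2) →
      ∀ (t : ℝ) (x : Fin d → ℝ),
        ‖deriv (fun t' : ℝ =>
            Ring.inverse ((1 : (Fin d → ℝ) →L[ℝ] (Fin d → ℝ))
                + ε • fderiv ℝ (g (t' / ε)) x)
              (fbar x + f₁ (t' / ε) (x + ε • g (t' / ε) x) - f₁ (t' / ε) x)) t‖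
          ≤ C₀ := by
  obtain rfl : g = fun τ x => ∫ s in (0:ℝ)..τ, f₁ s x := funext₂ hgdef
  have hF₀ (s y) : ‖f₁ s y‖ ≤ M := by simpa using hf₁Bdd 0 (by norm_num) (s, y)
  have hF₁ (p) : ‖fderiv ℝ (uncurry f₁) p‖ ≤ M := by
    rw [← norm_iteratedFDeriv_one]; exact hf₁Bdd 1 (by norm_num) p
  have hF₂ (p) : ‖fderiv ℝ (fderiv ℝ (uncurry f₁)) p‖ ≤ M := by
    rw [← norm_iteratedFDeriv_one, norm_iteratedFDeriv_fderiv]; exact hf₁Bdd 2 le_rfl p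
  have hcont (x) : Continuous fun s => f₁ s x := hf₁C2.continuous.comp (.prodMk_left x)
  refine ⟨16 * M ^ 2, fun ε hε hsmall t x =>
    norm_deriv_le_of_lip' (by positivity) (.of_forall fun t' => ?_)⟩
  exact norm_transformedDrift_sub_le hε (hsmall · x)
    (by simpa using hfbarBdd 0 (by norm_num) x) hF₀
    (norm_sub_le_of_norm_fderiv_uncurry_le (hf₁C2.differentiable two_ne_zero) hF₁)
    (fun τ τ' y => norm_sub_sub_sub_le_of_contDiff_uncurry hf₁C2 hF₂ τ τ' x y)
    (fun τ => (Periodic.norm_intervalIntegral_le (hf₁per · x) one_pos (hcont x) (hf₁mean x)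
      (hF₀ · x) τ).trans_eq (mul_one M))
    (norm_intervalIntegral_sub_le (hcont x) (hF₀ · x) 0)
    (norm_fderiv_intervalIntegral_sub_le (hf₁C2.of_le one_le_two) hF₁ · · x) t' t

/-- Non-stiffness of the transformed drift in the single-scale case: with
`F(t,x) = (I + ε ∂ₓg(t/ε,x))⁻¹ (f̄(x) + f₁(t/ε, Φ(t/ε,x)) − f₁(t/ε,x))` where
`Φ(τ,x) = x + ε g(τ,x)` and `g(τ,x) = ∫₀^τ f₁(s,x) ds`, the time derivative
`∂ₜF` is bounded by a constant `C₀` independent of `ε`, provided `f̄, f₁` are `C²`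
with derivatives up to order 2 bounded by `M`, `f₁` is 1-periodic and mean-zero in
its first argument, and `ε` is small enough that `‖ε ∂ₓg‖ ≤ 1/2` uniformly. -/
theorem transformed_drift_nonstiff {d : ℕ} (M : ℝ)
    (fbar : (Fin d → ℝ) → (Fin d → ℝ))
    (f₁ : ℝ → (Fin d → ℝ) → (Fin d → ℝ))
    (g : ℝ → (Fin d → ℝ) → (Fin d → ℝ))
    (hfbarC2 : ContDiff ℝ 2 fbar)
    (hfbarBdd : ∀ i ≤ 2, ∀ x, ‖iteratedFDeriv ℝ i fbar x‖ ≤ M)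
    (hf₁C2 : ContDiff ℝ 2 (fun p : ℝ × (Fin d → ℝ) => f₁ p.1 p.2))
    (hf₁Bdd : ∀ i ≤ 2, ∀ p : ℝ × (Fin d → ℝ),
      ‖iteratedFDeriv ℝ i (fun q : ℝ × (Fin d → ℝ) => f₁ q.1 q.2) p‖ ≤ M)
    (hf₁per : ∀ τ x, f₁ (τ + 1) x = f₁ τ x)
    (hf₁mean : ∀ x, (∫ s in (0:ℝ)..1, f₁ s x) = 0)
    (hgdef : ∀ τ x, g τ x = ∫ s in (0:ℝ)..τ, f₁ s x) :
    ∃ C₀ : ℝ, ∀ ε : ℝ, 0 < ε →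
      (∀ τ (x : Fin d → ℝ), ε * ‖fderiv ℝ (g τ) x‖ ≤ 1 / 2) →
      ∀ (t : ℝ) (x : Fin d → ℝ),
        ‖deriv (fun t' : ℝ =>
            Ring.inverse ((1 : (Fin d → ℝ) →L[ℝ] (Fin d → ℝ))
                + ε • fderiv ℝ (g (t' / ε)) x)
              (fbar x + f₁ (t' / ε) (x + ε • g (t' / ε) x) - f₁ (t' / ε) x)) t‖
          ≤ C₀ :=
  transformed_drift_nonstiff_general M fbar f₁ g hfbarBdd hf₁C2 hf₁Bdd hf₁per hf₁mean hgdef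
end
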